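/- For every word w over the positive integers of length n, the plane tree 𝒯(w) has exactly n + 1 leaves. -/

import Mathlib

/-- A plane tree: a node carrying an ordered (possibly empty) list of subtrees.
A leaf is `node []`. -/
inductive PlaneTree where
  | node : List PlaneTree → PlaneTree

/-- Auxiliary, fuel-indexed version of the map `w ↦ 𝒯(w)` from words to plane trees.
If `w` is nonempty with greatest letter `m`, writing `w = v₀ m v₁ m ⋯ m v_k`
(splitting at the occurrences of `m`), the tree is obtained by grafting the trees of
`v₀, v₁, …, v_k` (in this order) on a common root; the empty word gives a leaf.
The fuel argument (any value `≥ w.length` gives the correct answer, since each factor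
`vᵢ` is strictly shorter than `w`) makes the recursion structural. -/
def treeOfAux : ℕ → List ℕ → PlaneTree
  | 0, _ => .node []
  | _ + 1, [] => .node []
  | n + 1, a :: l =>
      .node (((a :: l).splitOn ((a :: l).foldr max 0)).map (treeOfAux n))

/-- The plane tree `𝒯(w)` associated to a word `w` over the natural numbers:
`𝒯(ε)` is a leaf, and if `w` is nonempty with greatest letter `m` occurring exactly `k`
times, writing `w = v₀ m v₁ m ⋯ m v_k`, then `𝒯(w) = node [𝒯(v₀), 𝒯(v₁), …, 𝒯(v_k)]`. -/
def treeOf (w : List ℕ) : PlaneTree := treeOfAux w.length w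

/-- The rank of the letter `x` in the word `w`: one plus the number of distinct letters
of `w` smaller than `x`. -/
def rank (w : List ℕ) (x : ℕ) : ℕ := ((w.filter (· < x)).dedup).length + 1

/-- The packed word of a word `w`: if the distinct letters occurring in `w` are
`b₁ < b₂ < … < b_k`, each occurrence of `b_j` is replaced by `j`. -/
def pack (w : List ℕ) : List ℕ := w.map (rank w)

mutual
  /-- The number of leaves of a plane tree: a leaf `node []` has one leaf, and the
  number of leaves of `node [T₀, …, T_k]` (nonempty list) is the sum of the numbers of
  leaves of the `Tᵢ`. -/
  def PlaneTree.leaves : PlaneTree → ℕ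
    | .node [] => 1
    | .node (t :: ts) => t.leaves + leavesList ts

  /-- Sum of the numbers of leaves of a list of plane trees. -/
  def leavesList : List PlaneTree → ℕ
    | [] => 0
    | t :: ts => t.leaves + leavesList ts
end

/-! Splitting `w` at its `k` occurrences of the greatest letter `m` gives `k + 1` factors, each
strictly shorter than `w` because it misses every `m`, and `Σ (|vᵢ| + 1) = |w| + 1` since the
`k` separators are exactly the `k` extra summands. Induction on the length then gives
`leaves 𝒯(w) = Σ leaves 𝒯(vᵢ) = Σ (|vᵢ| + 1) = |w| + 1`. -/

namespace List

variable {α : Type*} [BEq α]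

theorem sum_map_length_add_one_splitOn (a : α) (xs : List α) :
    ((xs.splitOn a).map (·.length + 1)).sum = xs.length + 1 := by
  induction xs with
  | nil => simp
  | cons x xs ih =>
    rw [splitOn_cons_eq_if_modifyHead]
    split
    · simp only [map_cons, sum_cons, length_nil, ih, length_cons]
      omega
    · obtain ⟨v, vs, hvs⟩ := exists_cons_of_ne_nil (splitOn_ne_nil a xs)
      rw [hvs] at ih ⊢
      simp only [modifyHead_cons, map_cons, sum_cons, length_cons] at ih ⊢
      omega

variable [LawfulBEq α]

theorem length_add_count_le_of_mem_splitOn {a : α} {xs v : List α} (hv : v ∈ xs.splitOn a) :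
    v.length + xs.count a ≤ xs.length := by
  induction xs generalizing v with
  | nil => simp_all
  | cons x xs ih =>
    rw [splitOn_cons_eq_if_modifyHead] at hv
    split at hv
    next hxa =>
      obtain rfl : x = a := beq_iff_eq.mp hxa
      rcases mem_cons.mp hv with rfl | hv
      · simpa using count_le_length
      · have := ih hv
        simp only [count_cons_self, length_cons]
        omega
    next hxa =>
      obtain ⟨u, us, hus⟩ := exists_cons_of_ne_nil (splitOn_ne_nil a xs)
      rw [hus, modifyHead_cons] at hv
      rw [hus] at ih
      rw [count_cons_of_ne (by simpa using hxa), length_cons]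
      rcases mem_cons.mp hv with rfl | hv
      · have := ih mem_cons_self
        simp only [length_cons]
        omega
      · exact (ih (mem_cons_of_mem u hv)).trans (Nat.le_succ _)

theorem length_lt_of_mem_splitOn {a : α} {xs v : List α} (ha : a ∈ xs)
    (hv : v ∈ xs.splitOn a) : v.length < xs.length := by
  have := length_add_count_le_of_mem_splitOn hv
  have := count_pos_iff.mpr ha
  omega

end List

theorem foldr_max_mem_cons (a : ℕ) (l : List ℕ) : (a :: l).foldr max 0 ∈ a :: l :=
  List.maximum_mem (List.foldr_max_of_ne_nil (List.cons_ne_nil a l)).symm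

theorem leavesList_eq_sum (ts : List PlaneTree) :
    leavesList ts = (ts.map PlaneTree.leaves).sum := by
  induction ts with
  | nil => rfl
  | cons t ts ih => simp [leavesList, ih]

theorem PlaneTree.leaves_node_of_ne_nil {ts : List PlaneTree} (h : ts ≠ []) :
    (node ts).leaves = (ts.map leaves).sum := by
  obtain ⟨t, ts, rfl⟩ := List.exists_cons_of_ne_nil h
  rw [← leavesList_eq_sum]
  rfl

theorem leaves_treeOfAux {n : ℕ} {w : List ℕ} (hw : w.length ≤ n) :
    (treeOfAux n w).leaves = w.length + 1 := by
  induction n generalizing w with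
  | zero => rw [List.length_eq_zero_iff.mp (Nat.le_zero.mp hw)]; rfl
  | succ n ih =>
    cases w with
    | nil => rfl
    | cons a l =>
      rw [treeOfAux, PlaneTree.leaves_node_of_ne_nil (by simp), List.map_map,
        ← List.sum_map_length_add_one_splitOn ((a :: l).foldr max 0)]
      congr 1
      refine List.map_congr_left fun v hv => ih ?_
      have := List.length_lt_of_mem_splitOn (foldr_max_mem_cons a l) hv
      omega

/-- For every word `w` over the positive integers, of length `n`, the plane tree `𝒯(w)`
has exactly `n + 1` leaves. -/
theorem leaves_treeOf (w : List ℕ) (hw : ∀ x ∈ w, 0 < x) :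
    (treeOf w).leaves = w.length + 1 :=
  leaves_treeOfAux le_rfl
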